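/- Let p, q ∈ ℝ, β, σ, λ, γ ∈ ℝ with γ ≠ 0 and σλ ≠ 0. Define K := [[p, 1−p],[1−q, q]], Q := I₂ − K − β(I₂ − K)K − λσK, ψ* := p + q − 1 − (2 − p − q)(1 − (p + q − 1)β)/(σλ), and B₁ := (1 + λ²/γ)I₂ − βK, B₂ := I₂ − βK − e₁e₁ᵀ(K(I₂ − βK) + λσK) + (λ²/γ)e₂e₂ᵀ, B₃ := I₂ − βK − e₂e₂ᵀ(K(I₂ − βK) + λσK) + (λ²/γ)e₁e₁ᵀ, B₄ := Q. Then: det B₁ = (γ(1−β)+λ²)(γ(1+(1−p−q)β)+λ²)/γ²; det B₂ = −[(γ(1−β)+λ²)(σλψ* + (1−q)(1+(1−p−q)β)) + σλ(1−q)(γ+λ²)]/γ; det B₃ = −[(γ(1−β)+λ²)(σλψ* + (1−p)(1+(1−p−q)β)) + σλ(1−p)(γ+λ²)]/γ; and det B₄ = σ²λ²ψ*. -/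

import Mathlib

open Matrix

/-!
`K` has eigenvalues `1` and `s = p + q - 1`, so a polynomial `f(K)` has determinant `f(1) f(s)`.
This gives `det B₁`, and, as `Q = 1 - (1 + β + λσ) K + β K²` with `f(1) = -λσ`, also
`det Q = σ²λ²ψ*`. The first row of `B₂` is that of `Q` and its second row that of `B₁`; its
determinant is a polynomial identity in `c = λσ` and `d = λ²/γ`, and `B₃` is `B₂` with the two
states swapped.
-/

section

variable {R : Type*} [CommRing R]

def markovMatrix (p q : R) : Matrix (Fin 2) (Fin 2) R := !![p, 1 - p; 1 - q, q]

theorem det_smul_one_sub_smul_markovMatrix (a b p q : R) :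
    (a • (1 : Matrix (Fin 2) (Fin 2) R) - b • markovMatrix p q).det
      = (a - b) * (a - b * (p + q - 1)) := by
  simp [markovMatrix, det_fin_two]
  ring

theorem det_zir_zir (β c p q : R) :
    (1 - markovMatrix p q - β • ((1 - markovMatrix p q) * markovMatrix p q)
        - c • markovMatrix p q).det
      = c * (c * (p + q - 1) - (2 - p - q) * (1 - (p + q - 1) * β)) := by
  simp [markovMatrix, det_fin_two, mul_apply, Fin.sum_univ_two, one_apply, -cons_mul]
  ring

theorem det_zir_pir (β c d p q : R) :
    (1 - β • markovMatrix p q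
        - !![1, 0; 0, 0]
          * (markovMatrix p q * (1 - β • markovMatrix p q) + c • markovMatrix p q)
        + d • !![0, 0; 0, 1]).det
      = -((1 - β + d) * (c * (p + q - 1) - (1 - p) * (1 - (p + q - 1) * β))
          + c * (1 - q) * (1 + d)) := by
  simp [markovMatrix, det_fin_two, mul_apply, Fin.sum_univ_two, one_apply, -cons_mul]
  ring

theorem reindex_swap_markovMatrix (p q : R) :
    reindexAlgEquiv R R (Equiv.swap 0 1) (markovMatrix p q) = markovMatrix q p := by
  ext i j
  fin_cases i <;> fin_cases j <;> rfl

theorem det_pir_zir (β c d p q : R) :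
    (1 - β • markovMatrix p q
        - !![0, 0; 0, 1]
          * (markovMatrix p q * (1 - β • markovMatrix p q) + c • markovMatrix p q)
        + d • !![1, 0; 0, 0]).det
      = -((1 - β + d) * (c * (p + q - 1) - (1 - q) * (1 - (p + q - 1) * β))
          + c * (1 - p) * (1 + d)) := by
  have swap_proj (x y : R) :
      reindexAlgEquiv R R (Equiv.swap 0 1) !![x, 0; 0, y] = !![y, 0; 0, x] := by
    ext i j
    fin_cases i <;> fin_cases j <;> rfl
  rw [← det_reindexAlgEquiv R R (Equiv.swap (0 : Fin 2) 1)]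
  simp only [map_add, map_sub, map_mul, map_smul, map_one, reindex_swap_markovMatrix, swap_proj]
  rw [det_zir_pir]
  ring

end

/-- Closed-form determinant identities for the four regime-configuration
coefficient matrices of the piecewise linear MSV system of the New Keynesian
model under optimal discretionary policy with relative weight `γ` on output
stabilization and a two-state Markov demand shock. -/
theorem nk_op_det_identities (p q β σ lam γ : ℝ) (hγ : γ ≠ 0) (h : σ * lam ≠ 0) :
    (let K : Matrix (Fin 2) (Fin 2) ℝ := !![p, 1 - p; 1 - q, q]
     let Q : Matrix (Fin 2) (Fin 2) ℝ := 1 - K - β • ((1 - K) * K) - (lam * σ) • K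
     let ψs : ℝ := p + q - 1 - (2 - p - q) * (1 - (p + q - 1) * β) / (σ * lam)
     let E₁ : Matrix (Fin 2) (Fin 2) ℝ := !![1, 0; 0, 0]
     let E₂ : Matrix (Fin 2) (Fin 2) ℝ := !![0, 0; 0, 1]
     let B₁ : Matrix (Fin 2) (Fin 2) ℝ :=
       (1 + lam ^ 2 / γ) • (1 : Matrix (Fin 2) (Fin 2) ℝ) - β • K
     let B₂ : Matrix (Fin 2) (Fin 2) ℝ :=
       1 - β • K - E₁ * (K * (1 - β • K) + (lam * σ) • K) + (lam ^ 2 / γ) • E₂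
     let B₃ : Matrix (Fin 2) (Fin 2) ℝ :=
       1 - β • K - E₂ * (K * (1 - β • K) + (lam * σ) • K) + (lam ^ 2 / γ) • E₁
     let B₄ : Matrix (Fin 2) (Fin 2) ℝ := Q
     B₁.det = (γ * (1 - β) + lam ^ 2) * (γ * (1 + (1 - p - q) * β) + lam ^ 2) / γ ^ 2 ∧
     B₂.det = -((γ * (1 - β) + lam ^ 2)
                  * (σ * lam * ψs + (1 - q) * (1 + (1 - p - q) * β))
               + σ * lam * (1 - q) * (γ + lam ^ 2)) / γ ∧
     B₃.det = -((γ * (1 - β) + lam ^ 2)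
                  * (σ * lam * ψs + (1 - p) * (1 + (1 - p - q) * β))
               + σ * lam * (1 - p) * (γ + lam ^ 2)) / γ ∧
     B₄.det = σ ^ 2 * lam ^ 2 * ψs) := by
  intro K Q ψs E₁ E₂ B₁ B₂ B₃ B₄
  have hψ : σ * lam * ψs = lam * σ * (p + q - 1) - (2 - p - q) * (1 - (p + q - 1) * β) := by
    rw [mul_sub, mul_div_cancel₀ _ h]
    ring
  have det₁ : B₁.det = _ := det_smul_one_sub_smul_markovMatrix (1 + lam ^ 2 / γ) β p q
  have det₂ : B₂.det = _ := det_zir_pir β (lam * σ) (lam ^ 2 / γ) p q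
  have det₃ : B₃.det = _ := det_pir_zir β (lam * σ) (lam ^ 2 / γ) p q
  have det₄ : B₄.det = _ := det_zir_zir β (lam * σ) p q
  refine ⟨?_, ?_, ?_, ?_⟩
  · rw [det₁]
    field_simp
    ring
  · rw [det₂, hψ]
    field_simp
    ring
  · rw [det₃, hψ]
    field_simp
    ring
  · rw [det₄, show σ ^ 2 * lam ^ 2 * ψs = σ * lam * (σ * lam * ψs) by ring, hψ]
    ring
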